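/- Let M₁, M₂ be k×k matrices over a noncommutative algebra and R = R₁₂(q) a scalar R-matrix satisfying the QYBE with R₁₂^T = R₂₁. If the pairs satisfy the relations (i) (M_{(j-1)})₁ R₁₂ (M_{(j)})₂ R₁₂^{-1} = R₁₂ (M_{(j)})₂ R₁₂^{-1} (M_{(j-1)})₁, (ii) R₁₂^T (Mₐ)₁ R₁₂^{-T} (Mₐ)₂ = (Mₐ)₂ R₁₂^{-1} (Mₐ)₁ R₁₂ for a = j−1, j, and M_{(j-1)} is invertible, then the braid-transformed matrices M'_{(j-1)} = M_{(j-1)} M_{(j)} M_{(j-1)}^{-1} and M'_{(j)} = M_{(j-1)} satisfy the same relations (i) and (ii). -/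
import Mathlib
set_option linter.unusedSectionVars false


open Matrix

variable {n : ℕ}

/-- `R₁₂` on `V⊗V⊗V`. -/
def lift12 (R : Matrix (Fin n × Fin n) (Fin n × Fin n) ℂ) :
    Matrix (Fin n × Fin n × Fin n) (Fin n × Fin n × Fin n) ℂ :=
  fun p q => R (p.1, p.2.1) (q.1, q.2.1) * (if p.2.2 = q.2.2 then 1 else 0)

/-- `R₁₃` on `V⊗V⊗V`. -/
def lift13 (R : Matrix (Fin n × Fin n) (Fin n × Fin n) ℂ) :
    Matrix (Fin n × Fin n × Fin n) (Fin n × Fin n × Fin n) ℂ :=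
  fun p q => R (p.1, p.2.2) (q.1, q.2.2) * (if p.2.1 = q.2.1 then 1 else 0)

/-- `R₂₃` on `V⊗V⊗V`. -/
def lift23 (R : Matrix (Fin n × Fin n) (Fin n × Fin n) ℂ) :
    Matrix (Fin n × Fin n × Fin n) (Fin n × Fin n × Fin n) ℂ :=
  fun p q => R (p.2.1, p.2.2) (q.2.1, q.2.2) * (if p.1 = q.1 then 1 else 0)

/-- `R₂₁`, i.e. `R` with both tensor factors flipped. -/
def flipR (R : Matrix (Fin n × Fin n) (Fin n × Fin n) ℂ) :
    Matrix (Fin n × Fin n) (Fin n × Fin n) ℂ :=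
  fun p q => R (p.2, p.1) (q.2, q.1)

variable {A : Type*} [Ring A] [Algebra ℂ A]

/-- `M₁ = M ⊗ Id`. -/
def leg1 (M : Matrix (Fin n) (Fin n) A) : Matrix (Fin n × Fin n) (Fin n × Fin n) A :=
  fun p q => if p.2 = q.2 then M p.1 q.1 else 0

/-- `M₂ = Id ⊗ M`. -/
def leg2 (M : Matrix (Fin n) (Fin n) A) : Matrix (Fin n × Fin n) (Fin n × Fin n) A :=
  fun p q => if p.1 = q.1 then M p.2 q.2 else 0

/-- Scalar (`ℂ`-entried, hence central) matrices viewed with entries in `A`. -/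
def scal (R : Matrix (Fin n × Fin n) (Fin n × Fin n) ℂ) :
    Matrix (Fin n × Fin n) (Fin n × Fin n) A :=
  R.map (algebraMap ℂ A)

lemma leg1_mul (M N : Matrix (Fin n) (Fin n) A) : leg1 (M*N) = leg1 M * leg1 N := by
  ext ⟨i,j⟩ ⟨k,l⟩
  simp [leg1, Matrix.mul_apply, Fintype.sum_prod_type, ite_and]

lemma leg2_mul (M N : Matrix (Fin n) (Fin n) A) : leg2 (M*N) = leg2 M * leg2 N := by
  ext ⟨i,j⟩ ⟨k,l⟩
  simp [leg2, Matrix.mul_apply, Fintype.sum_prod_type, ite_and]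

lemma leg1_one : leg1 (1 : Matrix (Fin n) (Fin n) A) = 1 := by
  ext ⟨i,j⟩ ⟨k,l⟩
  simp only [leg1, Matrix.one_apply, Prod.ext_iff]
  by_cases h : i = k <;> by_cases h2 : j = l <;> simp [h, h2]

lemma leg2_one : leg2 (1 : Matrix (Fin n) (Fin n) A) = 1 := by
  ext ⟨i,j⟩ ⟨k,l⟩
  simp only [leg2, Matrix.one_apply, Prod.ext_iff]
  by_cases h : i = k <;> by_cases h2 : j = l <;> simp [h, h2]

def sw (X : Matrix (Fin n × Fin n) (Fin n × Fin n) A) : Matrix (Fin n × Fin n) (Fin n × Fin n) A :=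
  X.submatrix (Equiv.prodComm (Fin n) (Fin n)) (Equiv.prodComm (Fin n) (Fin n))

lemma sw_mul (X Y : Matrix (Fin n × Fin n) (Fin n × Fin n) A) : sw (X*Y) = sw X * sw Y :=
  (Matrix.submatrix_mul_equiv X Y _ _ _).symm

lemma sw_leg1 (M : Matrix (Fin n) (Fin n) A) : sw (leg1 M) = leg2 M := by
  ext ⟨i,j⟩ ⟨k,l⟩; rfl

lemma sw_leg2 (M : Matrix (Fin n) (Fin n) A) : sw (leg2 M) = leg1 M := by
  ext ⟨i,j⟩ ⟨k,l⟩; rfl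

lemma sw_scal (R : Matrix (Fin n × Fin n) (Fin n × Fin n) ℂ) :
    sw (scal R : Matrix (Fin n × Fin n) (Fin n × Fin n) A) = scal (flipR R) := by
  ext ⟨i,j⟩ ⟨k,l⟩; rfl

lemma flipR_flipR (R : Matrix (Fin n × Fin n) (Fin n × Fin n) ℂ) : flipR (flipR R) = R := rfl

lemma flipR_mul (R S : Matrix (Fin n × Fin n) (Fin n × Fin n) ℂ) : flipR (R*S) = flipR R * flipR S := by
  have : ∀ (T : Matrix (Fin n × Fin n) (Fin n × Fin n) ℂ), flipR T =
      T.submatrix (Equiv.prodComm (Fin n) (Fin n)) (Equiv.prodComm (Fin n) (Fin n)) := fun T => rfl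
  rw [this, this, this, Matrix.submatrix_mul_equiv]

lemma flipR_one : flipR (1 : Matrix (Fin n × Fin n) (Fin n × Fin n) ℂ) = 1 := by
  ext ⟨i,j⟩ ⟨k,l⟩
  simp only [flipR, Matrix.one_apply, Prod.ext_iff]
  by_cases h : i = k <;> by_cases h2 : j = l <;> simp [h, h2]

lemma flipR_inv (R : Matrix (Fin n × Fin n) (Fin n × Fin n) ℂ) (h : IsUnit R.det) :
    flipR R⁻¹ = (flipR R)⁻¹ := by
  apply (Matrix.inv_eq_left_inv _).symm
  rw [← flipR_mul, Matrix.nonsing_inv_mul R h, flipR_one]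

lemma scal_mul (R S : Matrix (Fin n × Fin n) (Fin n × Fin n) ℂ) :
    (scal (R*S) : Matrix (Fin n × Fin n) (Fin n × Fin n) A) = scal R * scal S :=
  Matrix.map_mul

lemma scal_one : (scal 1 : Matrix (Fin n × Fin n) (Fin n × Fin n) A) = 1 :=
  Matrix.map_one _ (map_zero _) (map_one _)


lemma braid_key {G : Type*} [Monoid G] (a b c d r s t u ai bi : G)
    (haa : a*ai = 1) (hai : ai*a = 1) (hbb : b*bi = 1) (hbi : bi*b = 1)
    (hrs : r*s = 1) (hsr : s*r = 1) (htu : t*u = 1) (hut : u*t = 1)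
    (h1 : a*(r*(d*s)) = r*(d*(s*a)))
    (h2 : t*(a*(u*b)) = b*(s*(a*r)))
    (h3 : t*(c*(u*d)) = d*(s*(c*r)))
    (h4 : b*(t*(c*u)) = t*(c*(u*b)))
    (h5 : r*(b*(s*a)) = a*(u*(b*t))) :
    (a*(c*(ai*(r*(b*s)))) = r*(b*(s*(a*(c*ai)))))
    ∧ (t*(a*(c*(ai*(u*(b*(d*bi)))))) = b*(d*(bi*(s*(a*(c*(ai*r))))))) := by
  -- cancellation helpers
  have haa' : ∀ x, a*(ai*x) = x := fun x => by rw [← mul_assoc, haa, one_mul]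
  have hai' : ∀ x, ai*(a*x) = x := fun x => by rw [← mul_assoc, hai, one_mul]
  have hbb' : ∀ x, b*(bi*x) = x := fun x => by rw [← mul_assoc, hbb, one_mul]
  have hbi' : ∀ x, bi*(b*x) = x := fun x => by rw [← mul_assoc, hbi, one_mul]
  have hrs' : ∀ x, r*(s*x) = x := fun x => by rw [← mul_assoc, hrs, one_mul]
  have hsr' : ∀ x, s*(r*x) = x := fun x => by rw [← mul_assoc, hsr, one_mul]
  have htu' : ∀ x, t*(u*x) = x := fun x => by rw [← mul_assoc, htu, one_mul]
  have hut' : ∀ x, u*(t*x) = x := fun x => by rw [← mul_assoc, hut, one_mul]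
  -- forall-forms of the hypotheses
  have h1x : ∀ x, a*(r*(d*(s*x))) = r*(d*(s*(a*x))) := fun x => by
    have := congrArg (· * x) h1; simpa [mul_assoc] using this
  have h2x : ∀ x, t*(a*(u*(b*x))) = b*(s*(a*(r*x))) := fun x => by
    have := congrArg (· * x) h2; simpa [mul_assoc] using this
  have h3x : ∀ x, t*(c*(u*(d*x))) = d*(s*(c*(r*x))) := fun x => by
    have := congrArg (· * x) h3; simpa [mul_assoc] using this
  have h4x : ∀ x, b*(t*(c*(u*x))) = t*(c*(u*(b*x))) := fun x => by
    have := congrArg (· * x) h4; simpa [mul_assoc] using this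
  have h5x : ∀ x, r*(b*(s*(a*x))) = a*(u*(b*(t*x))) := fun x => by
    have := congrArg (· * x) h5; simpa [mul_assoc] using this
  -- derived relations
  have h5a : ai*(r*(b*s)) = u*(b*(t*ai)) := by
    have h := h5x ai
    rw [haa, mul_one] at h
    rw [h, hai']
  have h4a : ∀ x, u*(b*(t*(c*x))) = c*(u*(b*(t*x))) := fun x => by
    have h := h4x (t*x)
    rw [hut'] at h
    rw [h, hut']
  have h1ix : ∀ x, ai*(r*(d*(s*x))) = r*(d*(s*(ai*x))) := fun x => by
    have h := h1x (ai*x)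
    rw [haa'] at h
    rw [← h, hai']
  have stepA : ∀ x, bi*(t*(a*x)) = s*(a*(r*(bi*(t*x)))) := fun x => by
    have h := h2x (bi*(t*x))
    rw [hbb', hut'] at h
    rw [h, hbi']
  have stepB : ∀ x, bi*(t*(c*x)) = t*(c*(u*(bi*(t*x)))) := fun x => by
    have h := h4x (bi*(t*x))
    rw [hbb', hut'] at h
    rw [← h, hbi']
  have h2inv : ∀ x, t*(ai*(u*(b*x))) = b*(s*(ai*(r*x))) := fun x => by
    have e1 : t*(a*(u*(b*(s*(ai*(r*x)))))) = b*x := by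
      rw [h2x, hrs', haa', hsr']
    calc t*(ai*(u*(b*x)))
        = t*(ai*(u*(t*(a*(u*(b*(s*(ai*(r*x)))))))))  := by rw [e1]
      _ = b*(s*(ai*(r*x))) := by rw [hut', hai', htu']
  have stepC : ∀ x, bi*(t*(ai*(u*(b*x)))) = s*(ai*(r*x)) := fun x => by
    rw [h2inv, hbi']
  have h1ir : ai*(r*d) = r*(d*(s*(ai*r))) := by
    have h := h1ix r
    rw [show d*(s*r) = d by rw [hsr, mul_one]] at h
    exact h
  -- the key computation
  have SUF : bi*(t*(a*(c*(ai*(u*(b*d)))))) = d*(s*(a*(c*(ai*r)))) := by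
    rw [stepA, stepB, stepC, h1ir]
    rw [hsr']
    rw [h3x, hrs', h1x, hsr']
  -- conclusion (I)
  have concl1 : a*(c*(ai*(r*(b*s)))) = r*(b*(s*(a*(c*ai)))) := by
    rw [h5a, h5x, h4a]
  -- K commutes with b and bi
  have hKb : s*(a*(c*(ai*(r*b)))) = b*(s*(a*(c*(ai*r)))) := by
    have h := congrArg (fun z => s*(z*r)) concl1
    simp only [mul_assoc] at h
    rw [hsr'] at h
    rw [show b*(s*r) = b by rw [hsr, mul_one]] at h
    exact h
  have hKbi : s*(a*(c*(ai*(r*bi)))) = bi*(s*(a*(c*(ai*r)))) := by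
    have h := congrArg (fun z => bi*(z*bi)) hKb
    simp only [mul_assoc] at h
    rw [hbi'] at h
    rw [show r*(b*bi) = r by rw [hbb, mul_one]] at h
    exact h.symm
  refine ⟨concl1, ?_⟩
  calc t*(a*(c*(ai*(u*(b*(d*bi))))))
      = b*(bi*(t*(a*(c*(ai*(u*(b*(d*bi)))))))) := by rw [hbb']
    _ = b*((bi*(t*(a*(c*(ai*(u*(b*d)))))))*bi) := by simp only [mul_assoc]
    _ = b*((d*(s*(a*(c*(ai*r)))))*bi) := by rw [SUF]
    _ = b*(d*(bi*(s*(a*(c*(ai*r)))))) := by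
        simp only [mul_assoc]
        rw [hKbi]


/-- Let `R` be a scalar R-matrix satisfying the QYBE with `R₁₂ᵀ = R₂₁`.
Suppose `M_{(j-1)}, M_{(j)}` satisfy
(i) `(M_{(j-1)})₁ R (M_{(j)})₂ R⁻¹ = R (M_{(j)})₂ R⁻¹ (M_{(j-1)})₁` and
(ii) `Rᵀ (Mₐ)₁ R^{-T} (Mₐ)₂ = (Mₐ)₂ R⁻¹ (Mₐ)₁ R` for `a = j−1, j`, with `M_{(j-1)}`
invertible.  Then the braid-transformed matrices `M'_{(j-1)} = M_{(j-1)} M_{(j)} M_{(j-1)}⁻¹`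
and `M'_{(j)} = M_{(j-1)}` satisfy the same relations (i) and (ii). -/
theorem braid_preserves_relations (R : Matrix (Fin n × Fin n) (Fin n × Fin n) ℂ)
    (hinv : IsUnit R.det)
    (hQYBE : lift12 R * lift13 R * lift23 R = lift23 R * lift13 R * lift12 R)
    (hT : Rᵀ = flipR R)
    (Mjm Mj N : Matrix (Fin n) (Fin n) A)
    (hN : Mjm * N = 1 ∧ N * Mjm = 1)
    (hi : leg1 Mjm * scal R * leg2 Mj * scal R⁻¹ =
      scal R * leg2 Mj * scal R⁻¹ * leg1 Mjm)
    (hii : ∀ M' ∈ ({Mjm, Mj} : Set (Matrix (Fin n) (Fin n) A)),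
      scal Rᵀ * leg1 M' * scal (Rᵀ)⁻¹ * leg2 M' =
        leg2 M' * scal R⁻¹ * leg1 M' * scal R) :
    (leg1 (Mjm * Mj * N) * scal R * leg2 Mjm * scal R⁻¹ =
      scal R * leg2 Mjm * scal R⁻¹ * leg1 (Mjm * Mj * N)) ∧
    (∀ M' ∈ ({Mjm * Mj * N, Mjm} : Set (Matrix (Fin n) (Fin n) A)),
      scal Rᵀ * leg1 M' * scal (Rᵀ)⁻¹ * leg2 M' =
        leg2 M' * scal R⁻¹ * leg1 M' * scal R) := by
  have hdetT : IsUnit Rᵀ.det := by rw [Matrix.det_transpose]; exact hinv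
  have e1 : flipR R = Rᵀ := hT.symm
  have e2 : flipR R⁻¹ = (Rᵀ)⁻¹ := by rw [flipR_inv R hinv, ← hT]
  have e3 : flipR Rᵀ = R := by rw [hT]; rfl
  have e4 : flipR (Rᵀ)⁻¹ = R⁻¹ := by rw [flipR_inv Rᵀ hdetT, e3]
  have haa : leg1 Mjm * leg1 N = (1 : Matrix (Fin n × Fin n) (Fin n × Fin n) A) := by
    rw [← leg1_mul, hN.1, leg1_one]
  have hai : leg1 N * leg1 Mjm = (1 : Matrix (Fin n × Fin n) (Fin n × Fin n) A) := by
    rw [← leg1_mul, hN.2, leg1_one]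
  have hbb : leg2 Mjm * leg2 N = (1 : Matrix (Fin n × Fin n) (Fin n × Fin n) A) := by
    rw [← leg2_mul, hN.1, leg2_one]
  have hbi : leg2 N * leg2 Mjm = (1 : Matrix (Fin n × Fin n) (Fin n × Fin n) A) := by
    rw [← leg2_mul, hN.2, leg2_one]
  have hrs : (scal R : Matrix (Fin n × Fin n) (Fin n × Fin n) A) * scal R⁻¹ = 1 := by
    rw [← scal_mul, Matrix.mul_nonsing_inv R hinv, scal_one]
  have hsr : (scal R⁻¹ : Matrix (Fin n × Fin n) (Fin n × Fin n) A) * scal R = 1 := by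
    rw [← scal_mul, Matrix.nonsing_inv_mul R hinv, scal_one]
  have htu : (scal Rᵀ : Matrix (Fin n × Fin n) (Fin n × Fin n) A) * scal (Rᵀ)⁻¹ = 1 := by
    rw [← scal_mul, Matrix.mul_nonsing_inv Rᵀ hdetT, scal_one]
  have hut : (scal (Rᵀ)⁻¹ : Matrix (Fin n × Fin n) (Fin n × Fin n) A) * scal Rᵀ = 1 := by
    rw [← scal_mul, Matrix.nonsing_inv_mul Rᵀ hdetT, scal_one]
  have hii1 := hii Mjm (Set.mem_insert _ _)
  have hii2 := hii Mj (by simp)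
  have h4m := congrArg sw hi
  simp only [sw_mul, sw_leg1, sw_leg2, sw_scal, e1, e2] at h4m
  have h5m := congrArg sw hii1
  simp only [sw_mul, sw_leg1, sw_leg2, sw_scal, e1, e2, e3, e4] at h5m
  simp only [mul_assoc] at hi hii1 hii2 h4m h5m
  have key := braid_key (leg1 Mjm) (leg2 Mjm) (leg1 Mj) (leg2 Mj)
    (scal R) (scal R⁻¹) (scal Rᵀ) (scal (Rᵀ)⁻¹) (leg1 N) (leg2 N)
    haa hai hbb hbi hrs hsr htu hut hi hii1 hii2 h4m h5m
  constructor
  · rw [leg1_mul, leg1_mul]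
    simp only [mul_assoc]
    exact key.1
  · intro M2 hM2
    simp only [Set.mem_insert_iff, Set.mem_singleton_iff] at hM2
    rcases hM2 with rfl | rfl
    · rw [leg1_mul, leg1_mul, leg2_mul, leg2_mul]
      simp only [mul_assoc]
      exact key.2
    · simp only [mul_assoc]
      exact hii1
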